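/- Let a > 0, c ∈ ℝ, and set b = a/2 + (a/2)·√(1 + 4/a). Define v(t) = t²/a + c and u(t) = t²/b + c. Then b > a, and for all t ≥ 0, u′(t) = 2√(v(t) − u(t)). -/

import Mathlib

/-- Let `a > 0`, `c ∈ ℝ` and `b = a/2 + (a/2)√(1 + 4/a)`.  With `v t = t²/a + c` and
`u t = t²/b + c`, one has `b > a` and, for all `t ≥ 0`, `u′(t) = 2 √(v t − u t)`. -/
theorem stmt9 (a c : ℝ) (ha : 0 < a)
    (b : ℝ) (hb : b = a / 2 + (a / 2) * Real.sqrt (1 + 4 / a))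
    (v u : ℝ → ℝ) (hv : ∀ t, v t = t ^ 2 / a + c) (hu : ∀ t, u t = t ^ 2 / b + c) :
    a < b ∧ ∀ t : ℝ, 0 ≤ t → HasDerivAt u (2 * Real.sqrt (v t - u t)) t := by
  set s := Real.sqrt (1 + 4 / a) with hs
  have h4a : 0 < 4 / a := by positivity
  have hs2 : s ^ 2 = 1 + 4 / a := Real.sq_sqrt (by linarith)
  have hsnn : 0 ≤ s := Real.sqrt_nonneg _
  have hs1 : 1 < s := by nlinarith
  have hab : a < b := by
    rw [hb]; nlinarith
  have hbpos : 0 < b := lt_trans ha hab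
  have hb2 : b ^ 2 = a * b + a := by
    rw [hb]
    have := hs2
    field_simp at this ⊢
    nlinarith
  refine ⟨hab, fun t ht => ?_⟩
  have hvu : v t - u t = (t / b) ^ 2 := by
    rw [hv, hu]
    field_simp
    linear_combination (t ^ 2) * hb2
  have hsqrt : Real.sqrt (v t - u t) = t / b := by
    rw [hvu, Real.sqrt_sq (by positivity)]
  rw [hsqrt]
  have : HasDerivAt (fun t : ℝ => t ^ 2 / b + c) (2 * t ^ 1 / b) t :=
    ((hasDerivAt_pow 2 t).div_const b).add_const c
  have h2 : HasDerivAt u (2 * t ^ 1 / b) t := by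
    convert this using 1
    funext x; rw [hu]
  convert h2 using 1
  ring
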